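/- arXiv:1105.3714 — 2 statements merged into one kernel-verified Lean document; each statement's English description precedes it below -/
import Mathlib

section
/- Let G be a group with elements X_{q,i} and π_q satisfying: (a) X_{0,1}⁻¹ X_{q,i} X_{0,1} = X_{q+1,i} for q ≥ 1; (b) X_{0,1}⁻¹ π_q X_{0,1} = π_{q+1} for q ≥ 1; (c) π_q X_{q,i} = X_{q+1,i} π_q π_{q+1} for all q ≥ 0. Then in the abelianization of G, the image of π_1 is trivial and the images of X_{0,i} and X_{1,i} coincide. -/
theorem stmt_1 (G : Type*) [Group G] (n : ℕ) (hn : 0 < n)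
    (X : ℕ × Fin n → G) (π : ℕ → G)
    (ha : ∀ q : ℕ, 1 ≤ q → ∀ i : Fin n,
      (X (0, ⟨0, hn⟩))⁻¹ * X (q, i) * X (0, ⟨0, hn⟩) = X (q + 1, i))
    (hb : ∀ q : ℕ, 1 ≤ q →
      (X (0, ⟨0, hn⟩))⁻¹ * π q * X (0, ⟨0, hn⟩) = π (q + 1))
    (hc : ∀ q : ℕ, ∀ i : Fin n,
      π q * X (q, i) = X (q + 1, i) * π q * π (q + 1)) :
    Abelianization.of (π 1) = 1 ∧
      ∀ i : Fin n, Abelianization.of (X (0, i)) = Abelianization.of (X (1, i)) := by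
  set f := Abelianization.of (G := G) with hf
  have hX2 : f (X (2, ⟨0, hn⟩)) = f (X (1, ⟨0, hn⟩)) := by
    rw [← ha 1 le_rfl ⟨0, hn⟩]
    simp only [map_mul, map_inv]
    rw [mul_comm, ← mul_assoc, mul_inv_cancel, one_mul]
  have hπ2 : f (π 2) = f (π 1) := by
    rw [← hb 1 le_rfl]
    simp only [map_mul, map_inv]
    rw [mul_comm, ← mul_assoc, mul_inv_cancel, one_mul]
  have h1 : f (π 1) = 1 := by
    have h := congrArg f (hc 1 ⟨0, hn⟩)
    simp only [map_mul, hX2, hπ2] at h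
    rw [mul_comm (f (π 1)) (f (X (1, ⟨0, hn⟩))), mul_assoc] at h
    have h' := mul_left_cancel h
    exact (left_eq_mul.mp h')
  refine ⟨h1, fun i => ?_⟩
  have h := congrArg f (hc 0 i)
  simp only [map_mul, h1, mul_one] at h
  rw [mul_comm (f (π 0)) (f (X (0, i)))] at h
  exact mul_right_cancel h
end

section
/- Let M be a monoid with elements s_{i,d} and σ_i satisfying relations (M5a)–(M5d) (the rules for moving a σ past an s). Then every word in the generators {s_{i,d}, σ_i} is equal in M to a word of the form p·q where p is a product of elements s_{i,d} only and q is a product of elements σ_i only. -/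
theorem stmt_13 (M : Type*) [Monoid M] (n : ℕ) (hn : 1 ≤ n)
    (s : ℕ × Fin n → M) (σ : ℕ → M)
    (hgen : Submonoid.closure (Set.range s ∪ Set.range σ) = ⊤)
    (hM5a : ∀ (i j : ℕ) (d : Fin n), i < j →
      σ j * s (i, d) = s (i, d) * σ (j + 1))
    (hM5b : ∀ (j : ℕ) (d : Fin n),
      σ j * s (j, d) = s (j + 1, d) * σ j * σ (j + 1))
    (hM5c : ∀ (j : ℕ) (d : Fin n),
      σ j * s (j + 1, d) = s (j, d) * σ (j + 1) * σ j)
    (hM5d : ∀ (i j : ℕ) (d : Fin n), j + 1 < i →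
      σ j * s (i, d) = s (i, d) * σ j) :
    ∀ x : M, ∃ p ∈ Submonoid.closure (Set.range s),
      ∃ q ∈ Submonoid.closure (Set.range σ), x = p * q := by
  set P := Submonoid.closure (Set.range s) with hP
  set Q := Submonoid.closure (Set.range σ) with hQ
  have hsP : ∀ i d, s (i, d) ∈ P := fun i d => Submonoid.subset_closure ⟨(i, d), rfl⟩
  have hσQ : ∀ j, σ j ∈ Q := fun j => Submonoid.subset_closure ⟨j, rfl⟩
  -- key: σ j * s (i,d) = single s-generator * element of Q
  have key : ∀ j i d, ∃ i' d', ∃ q ∈ Q, σ j * s (i, d) = s (i', d') * q := by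
    intro j i d
    rcases lt_trichotomy i j with h | rfl | h
    · exact ⟨i, d, _, hσQ (j + 1), hM5a i j d h⟩
    · exact ⟨i + 1, d, _, mul_mem (hσQ i) (hσQ (i + 1)), by rw [hM5b, mul_assoc]⟩
    · rcases (Nat.succ_le_of_lt h).eq_or_lt with h2 | h2
      · subst h2
        exact ⟨j, d, _, mul_mem (hσQ (j + 1)) (hσQ j), by rw [hM5c, mul_assoc]⟩
      · exact ⟨i, d, _, hσQ j, hM5d i j d h2⟩
  -- q * s (i,d) = single s-generator * element of Q, for q ∈ Q
  have keyQ : ∀ q ∈ Q, ∀ i d, ∃ i' d', ∃ q' ∈ Q, q * s (i, d) = s (i', d') * q' := by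
    intro q hq
    induction hq using Submonoid.closure_induction with
    | mem x hx =>
      obtain ⟨j, rfl⟩ := hx
      exact key j
    | one => exact fun i d => ⟨i, d, 1, one_mem Q, by rw [one_mul, mul_one]⟩
    | mul a b ha hb iha ihb =>
      intro i d
      obtain ⟨i1, d1, q1, hq1, h1⟩ := ihb i d
      obtain ⟨i2, d2, q2, hq2, h2⟩ := iha i1 d1
      exact ⟨i2, d2, q2 * q1, mul_mem hq2 hq1, by
        rw [mul_assoc, h1, ← mul_assoc, h2, mul_assoc]⟩
  -- q * p ∈ P * Q for q ∈ Q, p ∈ P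
  have keyQP : ∀ p ∈ P, ∀ q ∈ Q, ∃ p' ∈ P, ∃ q' ∈ Q, q * p = p' * q' := by
    intro p hp
    induction hp using Submonoid.closure_induction with
    | mem x hx =>
      obtain ⟨⟨i, d⟩, rfl⟩ := hx
      intro q hq
      obtain ⟨i', d', q', hq', h⟩ := keyQ q hq i d
      exact ⟨_, hsP i' d', q', hq', h⟩
    | one => exact fun q hq => ⟨1, one_mem P, q, hq, by rw [mul_one, one_mul]⟩
    | mul a b ha hb iha ihb =>
      intro q hq
      obtain ⟨p1, hp1, q1, hq1, h1⟩ := iha q hq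
      obtain ⟨p2, hp2, q2, hq2, h2⟩ := ihb q1 hq1
      exact ⟨p1 * p2, mul_mem hp1 hp2, q2, hq2, by
        rw [← mul_assoc, h1, mul_assoc, h2, ← mul_assoc]⟩
  intro x
  have hx : x ∈ Submonoid.closure (Set.range s ∪ Set.range σ) := by
    rw [hgen]; trivial
  induction hx using Submonoid.closure_induction with
  | mem y hy =>
    rcases hy with ⟨⟨i, d⟩, rfl⟩ | ⟨j, rfl⟩
    · exact ⟨_, hsP i d, 1, one_mem Q, (mul_one _).symm⟩
    · exact ⟨1, one_mem P, _, hσQ j, (one_mul _).symm⟩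
  | one => exact ⟨1, one_mem P, 1, one_mem Q, (one_mul 1).symm⟩
  | mul a b ha hb iha ihb =>
    obtain ⟨p1, hp1, q1, hq1, h1⟩ := iha
    obtain ⟨p2, hp2, q2, hq2, h2⟩ := ihb
    obtain ⟨p3, hp3, q3, hq3, h3⟩ := keyQP p2 hp2 q1 hq1
    exact ⟨p1 * p3, mul_mem hp1 hp3, q3 * q2, mul_mem hq3 hq2, by
      rw [h1, h2, ← mul_assoc, mul_assoc p1, h3, ← mul_assoc, mul_assoc]⟩
end
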